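/- Let m ≥ 3 be an odd integer. The three elements [j,i], [j,j] and [j,k] belong to G₃(m), each is an involution (its square is the identity and it is not the identity), they are pairwise non-conjugate in G₃(m), and every element g ∈ G₃(m) of order two that fixes some nonzero quaternion is conjugate in G₃(m) to one of these three elements. -/

import Mathlib

noncomputable section

open Quaternion Real

/-- The quaternion `i`. -/
def qi : Quaternion ℝ := ⟨0, 1, 0, 0⟩
/-- The quaternion `j`. -/
def qj : Quaternion ℝ := ⟨0, 0, 1, 0⟩
/-- The quaternion `k`. -/
def qk : Quaternion ℝ := ⟨0, 0, 0, 1⟩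
/-- The unit quaternion `e_s = cos(π/s) + sin(π/s) i`. -/
def es (s : ℕ) : Quaternion ℝ := ⟨Real.cos (Real.pi / s), Real.sin (Real.pi / s), 0, 0⟩

lemma norm_eq_one_of_normSq {a : Quaternion ℝ} (h : Quaternion.normSq a = 1) : ‖a‖ = 1 := by
  have h2 : ‖a‖ * ‖a‖ = 1 := by rw [← Quaternion.normSq_eq_norm_mul_self, h]
  rcases mul_self_eq_one_iff.1 h2 with h' | h'
  · exact h'
  · nlinarith [norm_nonneg a]

lemma norm_qi : ‖qi‖ = 1 := norm_eq_one_of_normSq (by rw [Quaternion.normSq_def']; simp [qi])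
lemma norm_qj : ‖qj‖ = 1 := norm_eq_one_of_normSq (by rw [Quaternion.normSq_def']; simp [qj])
lemma norm_qk : ‖qk‖ = 1 := norm_eq_one_of_normSq (by rw [Quaternion.normSq_def']; simp [qk])
lemma norm_es (s : ℕ) : ‖es s‖ = 1 :=
  norm_eq_one_of_normSq (by
    rw [Quaternion.normSq_def']
    simp [es, Real.sin_sq_add_cos_sq, Real.cos_sq_add_sin_sq])

lemma self_mul_star_of_norm_one {a : Quaternion ℝ} (h : ‖a‖ = 1) : a * star a = 1 := by
  rw [Quaternion.self_mul_star]
  have h1 : Quaternion.normSq a = 1 := by rw [Quaternion.normSq_eq_norm_mul_self, h, mul_one]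
  rw [h1]; norm_num

lemma star_mul_self_of_norm_one {a : Quaternion ℝ} (h : ‖a‖ = 1) : star a * a = 1 := by
  rw [Quaternion.star_mul_self]
  have h1 : Quaternion.normSq a = 1 := by rw [Quaternion.normSq_eq_norm_mul_self, h, mul_one]
  rw [h1]; norm_num

/-- The rotation `[l,r] : x ↦ l̄ x r` of `ℝ⁴ ≅ ℍ`, for unit quaternions `l, r`. -/
def qrot (l r : Quaternion ℝ) (hl : ‖l‖ = 1) (hr : ‖r‖ = 1) :
    Quaternion ℝ ≃ₗ[ℝ] Quaternion ℝ where
  toFun x := star l * x * r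
  invFun x := l * x * star r
  map_add' x y := by noncomm_ring
  map_smul' c x := by simp [mul_smul_comm, smul_mul_assoc]
  left_inv x := by
    have h : l * (star l * x * r) * star r = (l * star l) * x * (r * star r) := by noncomm_ring
    simp [h, self_mul_star_of_norm_one hl, self_mul_star_of_norm_one hr]
  right_inv x := by
    have h : star l * (l * x * star r) * r = (star l * l) * x * (star r * r) := by noncomm_ring
    simp [h, star_mul_self_of_norm_one hl, star_mul_self_of_norm_one hr]

/-- The group `G₁(m)`. -/
def G1 (m : ℕ) : Subgroup (Quaternion ℝ ≃ₗ[ℝ] Quaternion ℝ) :=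
  Subgroup.closure
    {qrot (es m) 1 (norm_es m) norm_one,
     qrot 1 qi norm_one norm_qi,
     qrot 1 qj norm_one norm_qj,
     qrot qj (es 4) norm_qj (norm_es 4)}

/-- The group `G₂(m)`. -/
def G2 (m : ℕ) : Subgroup (Quaternion ℝ ≃ₗ[ℝ] Quaternion ℝ) :=
  Subgroup.closure
    {qrot (es m) 1 (norm_es m) norm_one,
     qrot 1 qi norm_one norm_qi,
     qrot (es (2 * m)) qj (norm_es (2 * m)) norm_qj,
     qrot qj (es 4) norm_qj (norm_es 4)}

/-- The group `G₃(m)`. -/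
def G3 (m : ℕ) : Subgroup (Quaternion ℝ ≃ₗ[ℝ] Quaternion ℝ) :=
  Subgroup.closure
    {qrot (es m) 1 (norm_es m) norm_one,
     qrot 1 qi norm_one norm_qi,
     qrot qj 1 norm_qj norm_one,
     qrot 1 qj norm_one norm_qj}

/-- The group `F₁(m)`. -/
def F1 (m : ℕ) : Subgroup (Quaternion ℝ ≃ₗ[ℝ] Quaternion ℝ) :=
  Subgroup.closure
    {qrot (es m) qi (norm_es m) norm_qi,
     qrot 1 qj norm_one norm_qj}

/-- The involution `[j, i]`. -/
def tau1 : Quaternion ℝ ≃ₗ[ℝ] Quaternion ℝ := qrot qj qi norm_qj norm_qi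
/-- The involution `[j, j]`. -/
def tau2 : Quaternion ℝ ≃ₗ[ℝ] Quaternion ℝ := qrot qj qj norm_qj norm_qj
/-- The involution `[j, k]`. -/
def tau3 : Quaternion ℝ ≃ₗ[ℝ] Quaternion ℝ := qrot qj qk norm_qj norm_qk

/-!
Every element of `G₃(m)` is `[l, r]` with `l` in the binary dihedral group `⟨e_m, j⟩` and `r` in
the quaternion group `Q₈`, and `[l, r]` determines `(l, r)` up to a common sign. Conjugating by
`[a, b]` replaces the right factor `r` by `b̄ r b = ±r`, so the right factors `i`, `j`, `k` of the
three involutions separate their classes. Conversely, `[l, r]² = 1` forces `l² = r² = ±1`; in the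
`+` case `r = ±1` is central and a fixed vector gives `[l, r] = 1`. In the `-` case, `m` odd
forces `l = e_m^t j`, and conjugating by `[e_m^σ, b]` brings `l` to `±j` and then `r` to `i`, `j`
or `k`.
-/

lemma Subgroup.exists_conj_mem_of_conj {G : Type*} [Group G] {H : Subgroup G} {S : Set G}
    {g g' h : G} (hh : h ∈ H) (hconj : h * g * h⁻¹ = g') (hg' : ∃ k ∈ H, k * g' * k⁻¹ ∈ S) :
    ∃ k ∈ H, k * g * k⁻¹ ∈ S := by
  obtain ⟨k, hk, hmem⟩ := hg'
  refine ⟨k * h, H.mul_mem hk hh, ?_⟩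
  simpa [← hconj, mul_assoc] using hmem

section QuaternionUnits

@[simp] lemma qi_re : qi.re = 0 := rfl
@[simp] lemma qi_imI : qi.imI = 1 := rfl
@[simp] lemma qi_imJ : qi.imJ = 0 := rfl
@[simp] lemma qi_imK : qi.imK = 0 := rfl
@[simp] lemma qj_re : qj.re = 0 := rfl
@[simp] lemma qj_imI : qj.imI = 0 := rfl
@[simp] lemma qj_imJ : qj.imJ = 1 := rfl
@[simp] lemma qj_imK : qj.imK = 0 := rfl
@[simp] lemma qk_re : qk.re = 0 := rfl
@[simp] lemma qk_imI : qk.imI = 0 := rfl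
@[simp] lemma qk_imJ : qk.imJ = 0 := rfl
@[simp] lemma qk_imK : qk.imK = 1 := rfl

@[simp] lemma qi_mul_qi : qi * qi = -1 := by ext <;> simp
@[simp] lemma qj_mul_qj : qj * qj = -1 := by ext <;> simp
@[simp] lemma qk_mul_qk : qk * qk = -1 := by ext <;> simp
@[simp] lemma qi_mul_qj : qi * qj = qk := by ext <;> simp
@[simp] lemma qj_mul_qi : qj * qi = -qk := by ext <;> simp
@[simp] lemma qj_mul_qk : qj * qk = qi := by ext <;> simp
@[simp] lemma qk_mul_qj : qk * qj = -qi := by ext <;> simp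
@[simp] lemma qk_mul_qi : qk * qi = qj := by ext <;> simp
@[simp] lemma qi_mul_qk : qi * qk = -qj := by ext <;> simp
@[simp] lemma star_qi : star qi = -qi := by ext <;> simp
@[simp] lemma star_qj : star qj = -qj := by ext <;> simp
@[simp] lemma star_qk : star qk = -qk := by ext <;> simp

end QuaternionUnits

section Qrot

variable {l r l' r' : ℍ[ℝ]}

@[simp] lemma qrot_apply (hl : ‖l‖ = 1) (hr : ‖r‖ = 1) (x : ℍ[ℝ]) :
    qrot l r hl hr x = star l * x * r := rfl

lemma qrot_congr (hl : ‖l‖ = 1) (hr : ‖r‖ = 1) (hl' : ‖l'‖ = 1) (hr' : ‖r'‖ = 1)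
    (h₁ : l = l') (h₂ : r = r') : qrot l r hl hr = qrot l' r' hl' hr' := by
  subst h₁ h₂; rfl

lemma qrot_mul (hl : ‖l‖ = 1) (hr : ‖r‖ = 1) (hl' : ‖l'‖ = 1) (hr' : ‖r'‖ = 1) :
    qrot l r hl hr * qrot l' r' hl' hr' =
      qrot (l' * l) (r' * r) (by simp [hl, hl']) (by simp [hr, hr']) :=
  LinearEquiv.ext fun x => by simp [star_mul, mul_assoc]

lemma qrot_one_one (h : ‖(1 : ℍ[ℝ])‖ = 1) : qrot 1 1 h h = 1 :=
  LinearEquiv.ext fun x => by simp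

lemma qrot_inv (hl : ‖l‖ = 1) (hr : ‖r‖ = 1) :
    (qrot l r hl hr)⁻¹ = qrot (star l) (star r) (by simpa using hl) (by simpa using hr) := by
  refine inv_eq_of_mul_eq_one_right ?_
  rw [qrot_mul, qrot_congr _ _ norm_one norm_one (star_mul_self_of_norm_one hl)
    (star_mul_self_of_norm_one hr), qrot_one_one]

lemma qrot_neg_left (hl : ‖l‖ = 1) (hr : ‖r‖ = 1) :
    qrot (-l) r (by simpa using hl) hr = qrot l (-r) hl (by simpa using hr) :=
  LinearEquiv.ext fun x => by simp

lemma qrot_conj (hl : ‖l‖ = 1) (hr : ‖r‖ = 1) (ha : ‖l'‖ = 1) (hb : ‖r'‖ = 1) :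
    qrot l' r' ha hb * qrot l r hl hr * (qrot l' r' ha hb)⁻¹ =
      qrot (star l' * l * l') (star r' * r * r') (by simp [hl, ha]) (by simp [hr, hb]) := by
  simp only [qrot_inv, qrot_mul, mul_assoc]

lemma eq_coe_re_of_commute {c : ℍ[ℝ]} (hi : c * qi = qi * c) (hj : c * qj = qj * c) :
    c = (c.re : ℍ[ℝ]) := by
  simp only [Quaternion.ext_iff, re_mul, imI_mul, imJ_mul, imK_mul, qi_re, qi_imI, qi_imJ, qi_imK,
    qj_re, qj_imI, qj_imJ, qj_imK, re_coe, imI_coe, imJ_coe, imK_coe] at hi hj ⊢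
  obtain ⟨-, -, hi₃, hi₄⟩ := hi
  obtain ⟨-, -, -, hj₄⟩ := hj
  refine ⟨trivial, ?_, ?_, ?_⟩ <;> linarith

/-- `l' l̄ = r' r̄` commutes with every quaternion, so it is a real number of norm one. -/
lemma eq_and_eq_or_eq_neg_of_qrot_eq (hl : ‖l‖ = 1) (hr : ‖r‖ = 1) (hl' : ‖l'‖ = 1) (hr' : ‖r'‖ = 1)
    (h : qrot l r hl hr = qrot l' r' hl' hr') : (l' = l ∧ r' = r) ∨ (l' = -l ∧ r' = -r) := by
  set c := l' * star l
  have hcomm : ∀ x, c * x = x * (r' * star r) := fun x => by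
    have := congrArg (fun y => l' * y * star r) (LinearEquiv.congr_fun h x)
    simp only [qrot_apply] at this
    calc c * x = l' * (star l * x * r) * star r := by
          simp [c, mul_assoc, self_mul_star_of_norm_one hr]
      _ = l' * (star l' * x * r') * star r := this
      _ = x * (r' * star r) := by simp [← mul_assoc, self_mul_star_of_norm_one hl']
  have hcr : c = r' * star r := by simpa using hcomm 1
  have hc : c = (c.re : ℍ[ℝ]) :=
    eq_coe_re_of_commute ((hcomm qi).trans (by rw [hcr])) ((hcomm qj).trans (by rw [hcr]))
  have hcabs : |c.re| = 1 := by
    have : ‖c‖ = 1 := by simp [c, hl, hl']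
    rwa [hc, Quaternion.norm_coe, Real.norm_eq_abs] at this
  have hl'c : l' = c * l := by simp [c, mul_assoc, star_mul_self_of_norm_one hl]
  have hr'c : r' = c * r := by simp [hcr, mul_assoc, star_mul_self_of_norm_one hr]
  rcases abs_eq zero_le_one |>.mp hcabs with h1 | h1 <;> rw [hc, h1] at hl'c hr'c
  · exact .inl ⟨by simpa using hl'c, by simpa using hr'c⟩
  · exact .inr ⟨by simpa using hl'c, by simpa using hr'c⟩

lemma qrot_ne_one (hl : ‖l‖ = 1) (hr : ‖r‖ = 1) (h₁ : l ≠ 1) (h₂ : l ≠ -1) :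
    qrot l r hl hr ≠ 1 := fun h => by
  rw [← qrot_one_one norm_one] at h
  rcases eq_and_eq_or_eq_neg_of_qrot_eq _ _ _ _ h with ⟨h', -⟩ | ⟨h', -⟩
  · exact h₁ h'.symm
  · exact h₂ (neg_eq_iff_eq_neg.mp h'.symm)

lemma qrot_mul_self_eq_one (hl : ‖l‖ = 1) (hr : ‖r‖ = 1) (hll : l * l = -1) (hrr : r * r = -1) :
    qrot l r hl hr * qrot l r hl hr = 1 := by
  rw [qrot_mul, qrot_congr _ _ (by simp) (by simp) hll hrr]
  exact LinearEquiv.ext fun x => by simp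

lemma mul_self_eq_of_qrot_mul_self_eq_one (hl : ‖l‖ = 1) (hr : ‖r‖ = 1)
    (h : qrot l r hl hr * qrot l r hl hr = 1) :
    (l * l = 1 ∧ r * r = 1) ∨ (l * l = -1 ∧ r * r = -1) := by
  rw [qrot_mul, ← qrot_one_one norm_one] at h
  rcases eq_and_eq_or_eq_neg_of_qrot_eq _ _ _ _ h with ⟨h₁, h₂⟩ | ⟨h₁, h₂⟩
  · exact .inl ⟨h₁.symm, h₂.symm⟩
  · exact .inr ⟨neg_eq_iff_eq_neg.mp h₁.symm, neg_eq_iff_eq_neg.mp h₂.symm⟩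

/-- A central right factor turns `[l, r]` into `x ↦ l̄ r x`, which fixes a nonzero
vector only if `l̄ r = 1`. -/
lemma qrot_eq_one_of_apply_eq_self (hl : ‖l‖ = 1) (hr : ‖r‖ = 1) (hc : ∀ y, Commute r y)
    {x : ℍ[ℝ]} (hx : x ≠ 0) (hfix : qrot l r hl hr x = x) : qrot l r hl hr = 1 := by
  have hlr : star l * r = 1 := by
    refine mul_right_cancel₀ hx ?_
    rw [one_mul, mul_assoc, (hc x).eq, ← mul_assoc]
    exact hfix
  have hrl : r = l := by
    simpa [← mul_assoc, self_mul_star_of_norm_one hl] using congrArg (l * ·) hlr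
  subst hrl
  exact LinearEquiv.ext fun y => by
    rw [qrot_apply, mul_assoc, ← (hc y).eq, ← mul_assoc, star_mul_self_of_norm_one hl, one_mul]
    rfl

end Qrot

section Rot

def rot (θ : ℝ) : ℍ[ℝ] := ⟨cos θ, sin θ, 0, 0⟩

@[simp] lemma rot_re (θ : ℝ) : (rot θ).re = cos θ := rfl
@[simp] lemma rot_imI (θ : ℝ) : (rot θ).imI = sin θ := rfl
@[simp] lemma rot_imJ (θ : ℝ) : (rot θ).imJ = 0 := rfl
@[simp] lemma rot_imK (θ : ℝ) : (rot θ).imK = 0 := rfl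

lemma es_eq_rot (s : ℕ) : es s = rot (π / s) := rfl

lemma rot_add (θ φ : ℝ) : rot (θ + φ) = rot θ * rot φ := by
  ext <;> simp only [rot_re, rot_imI, rot_imJ, rot_imK, re_mul, imI_mul, imJ_mul, imK_mul, cos_add,
    sin_add] <;> ring

@[simp] lemma rot_zero : rot 0 = 1 := by ext <;> simp

@[simp] lemma rot_pi : rot π = -1 := by ext <;> simp

lemma star_rot (θ : ℝ) : star (rot θ) = rot (-θ) := by ext <;> simp

lemma qj_mul_rot (θ : ℝ) : qj * rot θ = rot (-θ) * qj := by ext <;> simp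

lemma norm_rot (θ : ℝ) : ‖rot θ‖ = 1 :=
  norm_eq_one_of_normSq (by simp [Quaternion.normSq_def'])

lemma rot_pow (θ : ℝ) (n : ℕ) : rot θ ^ n = rot (n * θ) := by
  induction n with
  | zero => simp
  | succ n ih => rw [pow_succ, ih, ← rot_add]; push_cast; ring_nf

lemma rot_int_mul_two_pi (n : ℤ) : rot (n * (2 * π)) = 1 := by
  ext <;> simp [cos_int_mul_two_pi, sin_periodic.int_mul_eq n]

lemma star_rot_mul_rot_mul_qj_mul_rot (α β : ℝ) :
    star (rot β) * (rot α * qj) * rot β = rot (α - 2 * β) * qj := by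
  rw [star_rot, mul_assoc, mul_assoc, qj_mul_rot, ← mul_assoc (rot α), ← rot_add, ← mul_assoc,
    ← rot_add]
  ring_nf

lemma rot_mul_qj_mul_rot_mul_qj (α β : ℝ) : rot α * qj * (rot β * qj) = rot (α - β + π) := by
  ext <;> simp only [rot_re, rot_imI, rot_imJ, rot_imK, qj_re, qj_imI, qj_imJ, qj_imK, re_mul,
    imI_mul, imJ_mul, imK_mul, cos_add_pi, sin_add_pi, cos_sub, sin_sub] <;> ring

lemma star_rot_mul_qj (α : ℝ) : star (rot α * qj) = rot (α + π) * qj := by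
  ext <;> simp

end Rot

section Factors

variable {m : ℕ} {l r : ℍ[ℝ]}

/-- For `m ≠ 0`, the binary dihedral group `⟨e_m, j⟩` of order `4m`. -/
def dicyclic (m : ℕ) : Set ℍ[ℝ] :=
  {x | ∃ t : ℤ, x = rot (t * (π / m)) ∨ x = rot (t * (π / m)) * qj}

def quaternionGroup : Set ℍ[ℝ] := {1, -1, qi, -qi, qj, -qj, qk, -qk}

lemma norm_of_mem_dicyclic (hl : l ∈ dicyclic m) : ‖l‖ = 1 := by
  obtain ⟨t, rfl | rfl⟩ := hl <;> simp [norm_rot, norm_qj]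

lemma mul_mem_dicyclic (hm : m ≠ 0) {l l' : ℍ[ℝ]} (hl : l ∈ dicyclic m) (hl' : l' ∈ dicyclic m) :
    l * l' ∈ dicyclic m := by
  obtain ⟨t, rfl | rfl⟩ := hl <;> obtain ⟨u, rfl | rfl⟩ := hl'
  · exact ⟨t + u, .inl (by rw [← rot_add]; push_cast; ring_nf)⟩
  · exact ⟨t + u, .inr (by rw [← mul_assoc, ← rot_add]; push_cast; ring_nf)⟩
  · refine ⟨t - u, .inr ?_⟩
    rw [mul_assoc, qj_mul_rot, ← mul_assoc, ← rot_add]; push_cast; ring_nf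
  · refine ⟨t - u + m, .inl ?_⟩
    rw [rot_mul_qj_mul_rot_mul_qj]; congr 1; push_cast; field_simp

lemma star_mem_dicyclic (hm : m ≠ 0) (hl : l ∈ dicyclic m) : star l ∈ dicyclic m := by
  obtain ⟨t, rfl | rfl⟩ := hl
  · exact ⟨-t, .inl (by rw [star_rot]; push_cast; ring_nf)⟩
  · refine ⟨t + m, .inr ?_⟩
    rw [star_rot_mul_qj]; congr 2; push_cast; field_simp

lemma norm_of_mem_quaternionGroup (hr : r ∈ quaternionGroup) : ‖r‖ = 1 := by
  simp only [quaternionGroup, Set.mem_insert_iff, Set.mem_singleton_iff] at hr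
  rcases hr with rfl | rfl | rfl | rfl | rfl | rfl | rfl | rfl <;> simp [norm_qi, norm_qj, norm_qk]

lemma mul_mem_quaternionGroup {r r' : ℍ[ℝ]} (hr : r ∈ quaternionGroup)
    (hr' : r' ∈ quaternionGroup) : r * r' ∈ quaternionGroup := by
  simp only [quaternionGroup, Set.mem_insert_iff, Set.mem_singleton_iff] at hr hr' ⊢
  rcases hr with rfl | rfl | rfl | rfl | rfl | rfl | rfl | rfl <;>
    rcases hr' with rfl | rfl | rfl | rfl | rfl | rfl | rfl | rfl <;> simp

lemma star_mem_quaternionGroup (hr : r ∈ quaternionGroup) : star r ∈ quaternionGroup := by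
  simp only [quaternionGroup, Set.mem_insert_iff, Set.mem_singleton_iff] at hr ⊢
  rcases hr with rfl | rfl | rfl | rfl | rfl | rfl | rfl | rfl <;> simp

lemma star_mul_mul_eq_or_eq_neg {b r : ℍ[ℝ]} (hb : b ∈ quaternionGroup) (hr : r ∈ quaternionGroup) :
    star b * r * b = r ∨ star b * r * b = -r := by
  simp only [quaternionGroup, Set.mem_insert_iff, Set.mem_singleton_iff] at hb hr
  rcases hb with rfl | rfl | rfl | rfl | rfl | rfl | rfl | rfl <;>
    rcases hr with rfl | rfl | rfl | rfl | rfl | rfl | rfl | rfl <;> simp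

lemma neg_mem_quaternionGroup (hr : r ∈ quaternionGroup) : -r ∈ quaternionGroup := by
  have h : (-1 : ℍ[ℝ]) ∈ quaternionGroup := by simp [quaternionGroup]
  simpa using mul_mem_quaternionGroup h hr

lemma eq_one_or_eq_neg_one_of_mul_self_eq_one (hr : r ∈ quaternionGroup) (hrr : r * r = 1) :
    r = 1 ∨ r = -1 := by
  simp only [quaternionGroup, Set.mem_insert_iff, Set.mem_singleton_iff] at hr
  rcases hr with rfl | rfl | rfl | rfl | rfl | rfl | rfl | rfl <;>
    norm_num [Quaternion.ext_iff] at *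

end Factors

section G3

variable {m : ℕ} {l r : ℍ[ℝ]}

lemma qrot_rot_mem_G3 (t : ℤ) : qrot (rot (t * (π / m))) 1 (norm_rot _) norm_one ∈ G3 m := by
  have he : qrot (es m) 1 (norm_es m) norm_one ∈ G3 m := Subgroup.subset_closure (by simp)
  induction t using Int.induction_on with
  | zero => simp [qrot_one_one]
  | succ t ih =>
    convert mul_mem ih he using 1
    rw [qrot_mul]
    exact qrot_congr _ _ _ _ (by rw [es_eq_rot, ← rot_add]; push_cast; ring_nf) (one_mul 1).symm
  | pred t ih =>
    convert mul_mem ih (inv_mem he) using 1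
    rw [qrot_inv, qrot_mul]
    exact qrot_congr _ _ _ _ (by rw [es_eq_rot, star_rot, ← rot_add]; push_cast; ring_nf) (by simp)

lemma qrot_one_mem_G3 (hr : r ∈ quaternionGroup) :
    qrot 1 r norm_one (norm_of_mem_quaternionGroup hr) ∈ G3 m := by
  have hi : qrot 1 qi norm_one norm_qi ∈ G3 m := Subgroup.subset_closure (by simp)
  have hj : qrot 1 qj norm_one norm_qj ∈ G3 m := Subgroup.subset_closure (by simp)
  simp only [quaternionGroup, Set.mem_insert_iff, Set.mem_singleton_iff] at hr
  rcases hr with rfl | rfl | rfl | rfl | rfl | rfl | rfl | rfl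
  · simp [qrot_one_one]
  · simpa [qrot_mul] using mul_mem hi hi
  · exact hi
  · simpa [qrot_inv] using inv_mem hi
  · exact hj
  · simpa [qrot_inv] using inv_mem hj
  · simpa [qrot_mul] using mul_mem hj hi
  · simpa [qrot_mul] using mul_mem hi hj

lemma qrot_mem_G3 (hl : l ∈ dicyclic m) (hr : r ∈ quaternionGroup) :
    qrot l r (norm_of_mem_dicyclic hl) (norm_of_mem_quaternionGroup hr) ∈ G3 m := by
  have hj : qrot qj 1 norm_qj norm_one ∈ G3 m := Subgroup.subset_closure (by simp)
  have hl1 : qrot l 1 (norm_of_mem_dicyclic hl) norm_one ∈ G3 m := by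
    obtain ⟨t, rfl | rfl⟩ := hl
    · exact qrot_rot_mem_G3 t
    · simpa [qrot_mul] using mul_mem hj (qrot_rot_mem_G3 t)
  simpa [qrot_mul] using mul_mem (qrot_one_mem_G3 hr) hl1

lemma exists_qrot_of_mem_G3 (hm : m ≠ 0) {g : ℍ[ℝ] ≃ₗ[ℝ] ℍ[ℝ]} (hg : g ∈ G3 m) :
    ∃ l r hl hr, l ∈ dicyclic m ∧ r ∈ quaternionGroup ∧ g = qrot l r hl hr := by
  induction hg using Subgroup.closure_induction with
  | mem g hg =>
    simp only [Set.mem_insert_iff, Set.mem_singleton_iff] at hg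
    rcases hg with rfl | rfl | rfl | rfl
    · exact ⟨_, _, _, _, ⟨1, .inl (by simp [es_eq_rot])⟩, by simp [quaternionGroup], rfl⟩
    · exact ⟨_, _, _, _, ⟨0, .inl (by simp)⟩, by simp [quaternionGroup], rfl⟩
    · exact ⟨_, _, _, _, ⟨0, .inr (by simp)⟩, by simp [quaternionGroup], rfl⟩
    · exact ⟨_, _, _, _, ⟨0, .inl (by simp)⟩, by simp [quaternionGroup], rfl⟩
  | one =>
    exact ⟨1, 1, norm_one, norm_one, ⟨0, .inl (by simp)⟩, by simp [quaternionGroup],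
      (qrot_one_one _).symm⟩
  | mul g g' _ _ ih ih' =>
    obtain ⟨l, r, hl, hr, hlD, hrQ, rfl⟩ := ih
    obtain ⟨l', r', hl', hr', hlD', hrQ', rfl⟩ := ih'
    exact ⟨_, _, _, _, mul_mem_dicyclic hm hlD' hlD, mul_mem_quaternionGroup hrQ' hrQ, qrot_mul ..⟩
  | inv g _ ih =>
    obtain ⟨l, r, hl, hr, hlD, hrQ, rfl⟩ := ih
    exact ⟨_, _, _, _, star_mem_dicyclic hm hlD, star_mem_quaternionGroup hrQ, qrot_inv ..⟩

end G3

section Involutions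

variable {m : ℕ} {l r : ℍ[ℝ]}

/-- `rot (tπ/m) ^ (2m) = 1`, whereas a square root of `-1` has `2m`-th power `(-1)^m = -1`. -/
lemma rot_mul_self_ne_neg_one (hm : Odd m) (t : ℤ) :
    rot (t * (π / m)) * rot (t * (π / m)) ≠ -1 := by
  intro h
  have hpow : rot (t * (π / m)) ^ (2 * m) = 1 := by
    rw [rot_pow, ← rot_int_mul_two_pi t]
    congr 1
    field_simp [hm.pos.ne']
    push_cast
    ring
  rw [pow_mul, sq, h, hm.neg_one_pow] at hpow
  norm_num [Quaternion.ext_iff] at hpow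

lemma exists_eq_rot_mul_qj (hm : Odd m) (hl : l ∈ dicyclic m) (hll : l * l = -1) :
    ∃ t : ℤ, l = rot (t * (π / m)) * qj := by
  obtain ⟨t, rfl | rfl⟩ := hl
  · exact absurd hll (rot_mul_self_ne_neg_one hm t)
  · exact ⟨t, rfl⟩

lemma exists_qrot_rot_mul_qj_of_involution (hm : Odd m) {g : ℍ[ℝ] ≃ₗ[ℝ] ℍ[ℝ]} (hg : g ∈ G3 m)
    (hgg : g * g = 1) (hg1 : g ≠ 1) {x : ℍ[ℝ]} (hx : x ≠ 0) (hfix : g x = x) :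
    ∃ (t : ℤ) (r : ℍ[ℝ]) (hr : r ∈ quaternionGroup), r * r = -1 ∧
      g = qrot (rot (t * (π / m)) * qj) r (by simp [norm_rot, norm_qj])
        (norm_of_mem_quaternionGroup hr) := by
  obtain ⟨l, r, hl, hr, hlD, hrQ, rfl⟩ := exists_qrot_of_mem_G3 hm.pos.ne' hg
  rcases mul_self_eq_of_qrot_mul_self_eq_one hl hr hgg with ⟨-, hrr⟩ | ⟨hll, hrr⟩
  · have hc : ∀ y, Commute r y := by
      rcases eq_one_or_eq_neg_one_of_mul_self_eq_one hrQ hrr with rfl | rfl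
      exacts [Commute.one_left, Commute.neg_one_left]
    exact absurd (qrot_eq_one_of_apply_eq_self hl hr hc hx hfix) hg1
  · obtain ⟨t, rfl⟩ := exists_eq_rot_mul_qj hm hlD hll
    exact ⟨t, r, hrQ, hrr, rfl⟩

/-- Conjugation by `[e_m^σ, 1]` replaces `t` by `t - 2σ`, which for odd `m` can be made `0`
or `m`. -/
lemma exists_conj_qrot_rot_mul_qj (hm : Odd m) (t : ℤ) (hr : ‖r‖ = 1) :
    ∃ h ∈ G3 m,
      h * qrot (rot (t * (π / m)) * qj) r (by simp [norm_rot, norm_qj]) hr * h⁻¹ =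
        qrot qj r norm_qj hr ∨
      h * qrot (rot (t * (π / m)) * qj) r (by simp [norm_rot, norm_qj]) hr * h⁻¹ =
        qrot qj (-r) norm_qj (by simpa using hr) := by
  have hconj (σ : ℤ) :
      qrot (rot (σ * (π / m))) 1 (norm_rot _) norm_one *
          qrot (rot (t * (π / m)) * qj) r (by simp [norm_rot, norm_qj]) hr *
          (qrot (rot (σ * (π / m))) 1 (norm_rot _) norm_one)⁻¹ =
        qrot (rot ((t - 2 * σ : ℤ) * (π / m)) * qj) r (by simp [norm_rot, norm_qj]) hr := by
    rw [qrot_conj]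
    refine qrot_congr _ _ _ _ ?_ (by simp)
    rw [star_rot_mul_rot_mul_qj_mul_rot]
    push_cast
    ring_nf
  obtain ⟨σ, rfl | rfl⟩ := Int.even_or_odd' t
  · refine ⟨_, qrot_rot_mem_G3 σ, .inl ?_⟩
    rw [hconj]
    exact qrot_congr _ _ _ _ (by simp) rfl
  · obtain ⟨k, rfl⟩ := hm
    refine ⟨_, qrot_rot_mem_G3 (σ - k), .inr ?_⟩
    rw [hconj, ← qrot_neg_left _ hr]
    refine qrot_congr _ _ _ _ ?_ rfl
    have : ((2 * σ + 1 - 2 * (σ - k) : ℤ) : ℝ) * (π / ((2 * k + 1 : ℕ) : ℝ)) = π := by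
      push_cast
      field_simp
      ring
    rw [this, rot_pi, neg_one_mul]

lemma exists_conj_qrot_qj_mem_taus (hr : r ∈ quaternionGroup) (hrr : r * r = -1) :
    ∃ h ∈ G3 m, h * qrot qj r norm_qj (norm_of_mem_quaternionGroup hr) * h⁻¹ ∈
      ({tau1, tau2, tau3} : Set (ℍ[ℝ] ≃ₗ[ℝ] ℍ[ℝ])) := by
  have h1 : (1 : ℍ[ℝ]) ∈ quaternionGroup := by simp [quaternionGroup]
  have hi : qi ∈ quaternionGroup := by simp [quaternionGroup]
  have hj : qj ∈ quaternionGroup := by simp [quaternionGroup]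
  simp only [quaternionGroup, Set.mem_insert_iff, Set.mem_singleton_iff] at hr
  rcases hr with rfl | rfl | rfl | rfl | rfl | rfl | rfl | rfl
  · norm_num [Quaternion.ext_iff] at hrr
  · norm_num [Quaternion.ext_iff] at hrr
  · exact ⟨_, qrot_one_mem_G3 h1, by simp [qrot_conj, tau1]⟩
  · exact ⟨_, qrot_one_mem_G3 hj, by simp [qrot_conj, tau1]⟩
  · exact ⟨_, qrot_one_mem_G3 h1, by simp [qrot_conj, tau2]⟩
  · exact ⟨_, qrot_one_mem_G3 hi, by simp [qrot_conj, tau2]⟩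
  · exact ⟨_, qrot_one_mem_G3 h1, by simp [qrot_conj, tau3]⟩
  · exact ⟨_, qrot_one_mem_G3 hi, by simp [qrot_conj, tau3]⟩

lemma exists_conj_mem_taus_of_involution (hm : Odd m) {g : ℍ[ℝ] ≃ₗ[ℝ] ℍ[ℝ]} (hg : g ∈ G3 m)
    (hgg : g * g = 1) (hg1 : g ≠ 1) (hfix : ∃ x : ℍ[ℝ], x ≠ 0 ∧ g x = x) :
    ∃ h ∈ G3 m, h * g * h⁻¹ ∈ ({tau1, tau2, tau3} : Set (ℍ[ℝ] ≃ₗ[ℝ] ℍ[ℝ])) := by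
  obtain ⟨x, hx, hgx⟩ := hfix
  obtain ⟨t, r, hrQ, hrr, rfl⟩ := exists_qrot_rot_mul_qj_of_involution hm hg hgg hg1 hx hgx
  obtain ⟨h, hh, hconj | hconj⟩ :=
    exists_conj_qrot_rot_mul_qj hm t (norm_of_mem_quaternionGroup hrQ)
  · exact Subgroup.exists_conj_mem_of_conj hh hconj (exists_conj_qrot_qj_mem_taus hrQ hrr)
  · exact Subgroup.exists_conj_mem_of_conj hh hconj
      (exists_conj_qrot_qj_mem_taus (neg_mem_quaternionGroup hrQ) (by simpa using hrr))

lemma not_exists_conj_qrot {l' r' : ℍ[ℝ]} (hm : m ≠ 0) (hl : ‖l‖ = 1) (hr : ‖r‖ = 1)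
    (hl' : ‖l'‖ = 1) (hr' : ‖r'‖ = 1) (hrQ : r ∈ quaternionGroup) (h₁ : r' ≠ r) (h₂ : r' ≠ -r) :
    ¬∃ h ∈ G3 m, h * qrot l r hl hr * h⁻¹ = qrot l' r' hl' hr' := by
  rintro ⟨h, hh, hconj⟩
  obtain ⟨a, b, ha, hb, -, hbQ, rfl⟩ := exists_qrot_of_mem_G3 hm hh
  rw [qrot_conj] at hconj
  rcases eq_and_eq_or_eq_neg_of_qrot_eq _ _ _ _ hconj with ⟨-, h⟩ | ⟨-, h⟩ <;>
    rcases star_mul_mul_eq_or_eq_neg hbQ hrQ with h' | h' <;> rw [h'] at h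
  exacts [h₁ h, h₂ h, h₂ h, h₁ (by simpa using h)]

end Involutions

theorem G3_three_isotropy_classes_general (m : ℕ) (hodd : Odd m) :
    (tau1 ∈ G3 m ∧ tau2 ∈ G3 m ∧ tau3 ∈ G3 m) ∧
    (tau1 * tau1 = 1 ∧ tau1 ≠ 1) ∧
    (tau2 * tau2 = 1 ∧ tau2 ≠ 1) ∧
    (tau3 * tau3 = 1 ∧ tau3 ≠ 1) ∧
    (¬∃ h ∈ G3 m, h * tau1 * h⁻¹ = tau2) ∧
    (¬∃ h ∈ G3 m, h * tau1 * h⁻¹ = tau3) ∧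
    (¬∃ h ∈ G3 m, h * tau2 * h⁻¹ = tau3) ∧
    (∀ g ∈ G3 m, g * g = 1 → g ≠ 1 → (∃ x : Quaternion ℝ, x ≠ 0 ∧ g x = x) →
      ∃ h ∈ G3 m, h * g * h⁻¹ = tau1 ∨ h * g * h⁻¹ = tau2 ∨ h * g * h⁻¹ = tau3) := by
  have hm : m ≠ 0 := hodd.pos.ne'
  have hqj : qj ∈ dicyclic m := ⟨0, .inr (by simp)⟩
  have hqj1 : qj ≠ 1 := by simp [Quaternion.ext_iff]
  have hqj1' : qj ≠ -1 := by simp [Quaternion.ext_iff]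
  refine ⟨⟨qrot_mem_G3 hqj (by simp [quaternionGroup]), qrot_mem_G3 hqj (by simp [quaternionGroup]),
      qrot_mem_G3 hqj (by simp [quaternionGroup])⟩,
    ⟨qrot_mul_self_eq_one _ _ (by simp) (by simp), qrot_ne_one _ _ hqj1 hqj1'⟩,
    ⟨qrot_mul_self_eq_one _ _ (by simp) (by simp), qrot_ne_one _ _ hqj1 hqj1'⟩,
    ⟨qrot_mul_self_eq_one _ _ (by simp) (by simp), qrot_ne_one _ _ hqj1 hqj1'⟩,
    not_exists_conj_qrot hm _ _ _ _ (by simp [quaternionGroup]) (by simp [Quaternion.ext_iff])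
      (by simp [Quaternion.ext_iff]),
    not_exists_conj_qrot hm _ _ _ _ (by simp [quaternionGroup]) (by simp [Quaternion.ext_iff])
      (by simp [Quaternion.ext_iff]),
    not_exists_conj_qrot hm _ _ _ _ (by simp [quaternionGroup]) (by simp [Quaternion.ext_iff])
      (by simp [Quaternion.ext_iff]),
    fun g hg hgg hg1 hfix => by simpa using exists_conj_mem_taus_of_involution hodd hg hgg hg1 hfix⟩

/-- `[j,i]`, `[j,j]` and `[j,k]` are pairwise non-conjugate involutions of `G₃(m)`,
and every order-two element of `G₃(m)` fixing a nonzero quaternion is conjugate in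
`G₃(m)` to one of them. -/
theorem G3_three_isotropy_classes (m : ℕ) (hm : 3 ≤ m) (hodd : Odd m) :
    (tau1 ∈ G3 m ∧ tau2 ∈ G3 m ∧ tau3 ∈ G3 m) ∧
    (tau1 * tau1 = 1 ∧ tau1 ≠ 1) ∧
    (tau2 * tau2 = 1 ∧ tau2 ≠ 1) ∧
    (tau3 * tau3 = 1 ∧ tau3 ≠ 1) ∧
    (¬∃ h ∈ G3 m, h * tau1 * h⁻¹ = tau2) ∧
    (¬∃ h ∈ G3 m, h * tau1 * h⁻¹ = tau3) ∧
    (¬∃ h ∈ G3 m, h * tau2 * h⁻¹ = tau3) ∧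
    (∀ g ∈ G3 m, g * g = 1 → g ≠ 1 → (∃ x : Quaternion ℝ, x ≠ 0 ∧ g x = x) →
      ∃ h ∈ G3 m, h * g * h⁻¹ = tau1 ∨ h * g * h⁻¹ = tau2 ∨ h * g * h⁻¹ = tau3) :=
  G3_three_isotropy_classes_general m hodd
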